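/- arXiv:2306.07470 — 9 statements merged into one kernel-verified Lean document; each statement's English description precedes it below -/
import Mathlib

section
/- Self-attention is permutation-equivariant: for all n, d, d_k, d_v ≥ 1, all weight matrices W_q, W_k : Matrix (Fin d) (Fin d_k) ℝ and W_v : Matrix (Fin d) (Fin d_v) ℝ, every token map X : Fin n → (Fin d → ℝ), and every permutation σ of Fin n, the self-attention operator satisfies A_s(X ∘ σ) = (A_s X) ∘ σ. -/
open Matrix
noncomputable section
/-- Softmax of a score vector over a finite index type:
`softmax a i = exp (a i) / ∑ j, exp (a j)`. -/
def softmax {ι : Type*} [Fintype ι] (a : ι → ℝ) : ι → ℝ :=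
  fun i => Real.exp (a i) / ∑ j, Real.exp (a j)
/-- Self-attention with parameters `Wq, Wk : Matrix (Fin d) (Fin dk) ℝ`,
`Wv : Matrix (Fin d) (Fin dv) ℝ`, acting on tokens `X : ι → (Fin d → ℝ)`:
`A_s X i = ∑ j, softmax (fun j' => ⟪Wqᵀ (X i), Wkᵀ (X j')⟫) j • (Wvᵀ (X j))`,
where `⟪·,·⟫` is the Euclidean inner (dot) product. -/
def selfAttn {ι : Type*} [Fintype ι] {d dk dv : ℕ}
    (Wq Wk : Matrix (Fin d) (Fin dk) ℝ) (Wv : Matrix (Fin d) (Fin dv) ℝ)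
    (X : ι → (Fin d → ℝ)) : ι → (Fin dv → ℝ) :=
  fun i => ∑ j,
    softmax (fun j' => Wq.transpose.mulVec (X i) ⬝ᵥ Wk.transpose.mulVec (X j')) j
      • Wv.transpose.mulVec (X j)

/-- Self-attention is permutation-equivariant: `A_s (X ∘ σ) = (A_s X) ∘ σ`. -/
theorem selfAttn_permutation_equivariant
    (n d dk dv : ℕ) (hn : 1 ≤ n) (hd : 1 ≤ d) (hdk : 1 ≤ dk) (hdv : 1 ≤ dv)
    (Wq Wk : Matrix (Fin d) (Fin dk) ℝ) (Wv : Matrix (Fin d) (Fin dv) ℝ)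
    (X : Fin n → (Fin d → ℝ)) (σ : Equiv.Perm (Fin n)) :
    selfAttn Wq Wk Wv (X ∘ σ) = (selfAttn Wq Wk Wv X) ∘ σ := by
  funext i
  simp only [selfAttn, Function.comp_apply]
  have hden : ∀ y : Fin dk → ℝ,
      (∑ j', Real.exp (y ⬝ᵥ Wk.transpose.mulVec (X (σ j')))) =
      ∑ j', Real.exp (y ⬝ᵥ Wk.transpose.mulVec (X j')) := fun y =>
    Equiv.sum_comp σ (fun j' => Real.exp (y ⬝ᵥ Wk.transpose.mulVec (X j')))
  refine Fintype.sum_equiv σ _ _ (fun j => ?_)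
  simp only [softmax, Function.comp_apply, hden]
end
end

section
/- Global self-attention on a circular token grid is shift-equivariant: for all M, N ≥ 1, all weight matrices W_q, W_k : Matrix (Fin d) (Fin d_k) ℝ and W_v : Matrix (Fin d) (Fin d_v) ℝ, every token map X : ZMod M × ZMod N → (Fin d → ℝ), and every (u,v) ∈ ZMod M × ZMod N, A_s(shift_{(u,v)} X) = shift_{(u,v)} (A_s X), where A_s is self-attention with index set ZMod M × ZMod N. -/
open Matrix
noncomputable section
/-- Circular shift of a 2D signal `X : ZMod M × ZMod N → α` by `(u,v)`:
`(shift_{(u,v)} X)(i,j) = X (i-u, j-v)`. -/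
def cshift2 {M N : ℕ} {α : Type*} (uv : ZMod M × ZMod N)
    (X : ZMod M × ZMod N → α) : ZMod M × ZMod N → α :=
  fun ij => X (ij.1 - uv.1, ij.2 - uv.2)
/-- Global self-attention on a circular token grid is shift-equivariant:
`A_s (shift_{(u,v)} X) = shift_{(u,v)} (A_s X)`. -/
theorem selfAttn_shift_equivariant
    (M N d dk dv : ℕ) [NeZero M] [NeZero N]
    (hM : 1 ≤ M) (hN : 1 ≤ N) (hd : 1 ≤ d) (hdk : 1 ≤ dk) (hdv : 1 ≤ dv)
    (Wq Wk : Matrix (Fin d) (Fin dk) ℝ) (Wv : Matrix (Fin d) (Fin dv) ℝ)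
    (X : ZMod M × ZMod N → (Fin d → ℝ)) (uv : ZMod M × ZMod N) :
    selfAttn Wq Wk Wv (cshift2 uv X) = cshift2 uv (selfAttn Wq Wk Wv X) := by
  funext i
  simp only [selfAttn, cshift2, softmax]
  refine Fintype.sum_equiv ((Equiv.subRight uv.1).prodCongr (Equiv.subRight uv.2)) _ _ ?_
  intro j
  congr 2
  exact Fintype.sum_equiv ((Equiv.subRight uv.1).prodCongr (Equiv.subRight uv.2)) _ _
    (fun j' => rfl)
end
end

section
/- (Lemma 1) The polyphase anchoring operator P is general shift-equivariant: fix s, H, W, C ≥ 1 and X : ZMod (s·H) × ZMod (s·W) → EuclideanSpace ℝ (Fin C) whose polyphase norms N_{pq}(X) have a unique maximizer over ZMod s × ZMod s. Then for every (u,v) ∈ ZMod (s·H) × ZMod (s·W), the shifted input shift_{(u,v)} X also has a unique maximizing polyphase, and there exists (u',v') ∈ ZMod (s·H) × ZMod (s·W) such that P(shift_{(u,v)} X) = shift_{(u',v')} (P X). -/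
open Matrix
noncomputable section
/-- Residue of a grid point of `ZMod (s·H) × ZMod (s·W)` modulo `s` in each coordinate. -/
def resPh (s : ℕ) {H W : ℕ} (ij : ZMod (s * H) × ZMod (s * W)) : ZMod s × ZMod s :=
  (ZMod.castHom (dvd_mul_right s H) (ZMod s) ij.1,
   ZMod.castHom (dvd_mul_right s W) (ZMod s) ij.2)

/-- Polyphase norm `N_{pq}(X) = ∑ over grid points with residue `(p,q)` of `‖X(i,j)‖²`. -/
def polyNorm (s : ℕ) {H W C : ℕ} [NeZero (s * H)] [NeZero (s * W)]
    (X : ZMod (s * H) × ZMod (s * W) → EuclideanSpace ℝ (Fin C))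
    (pq : ZMod s × ZMod s) : ℝ :=
  ∑ ij : ZMod (s * H) × ZMod (s * W), if resPh s ij = pq then ‖X ij‖ ^ 2 else 0

/-- The polyphase norms of `X` have a (unique) strict maximizer over `ZMod s × ZMod s`. -/
def HasUniqueMaxPhase (s : ℕ) {H W C : ℕ} [NeZero (s * H)] [NeZero (s * W)]
    (X : ZMod (s * H) × ZMod (s * W) → EuclideanSpace ℝ (Fin C)) : Prop :=
  ∃ pq : ZMod s × ZMod s, ∀ pq' : ZMod s × ZMod s, pq' ≠ pq →
    polyNorm s X pq' < polyNorm s X pq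

open Classical in
/-- The maximizing phase `(p̂,q̂)`, cast into the big grid via canonical representatives. -/
def anchorPhase (s : ℕ) {H W C : ℕ} [NeZero (s * H)] [NeZero (s * W)]
    (X : ZMod (s * H) × ZMod (s * W) → EuclideanSpace ℝ (Fin C)) :
    ZMod (s * H) × ZMod (s * W) :=
  if h : HasUniqueMaxPhase s X then
    (((h.choose.1.val : ℕ) : ZMod (s * H)), ((h.choose.2.val : ℕ) : ZMod (s * W)))
  else (0, 0)

/-- Polyphase anchoring operator: `P X = shift_{(-p̂',-q̂')} X`, circularly shifting `X`
so that its maximizing polyphase aligns with the anchors. -/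
def polyAnchor (s : ℕ) {H W C : ℕ} [NeZero (s * H)] [NeZero (s * W)]
    (X : ZMod (s * H) × ZMod (s * W) → EuclideanSpace ℝ (Fin C)) :
    ZMod (s * H) × ZMod (s * W) → EuclideanSpace ℝ (Fin C) :=
  cshift2 (-(anchorPhase s X).1, -(anchorPhase s X).2) X

lemma cshift2_cshift2 {M N : ℕ} {α : Type*} (a b : ZMod M × ZMod N)
    (X : ZMod M × ZMod N → α) :
    cshift2 a (cshift2 b X) = cshift2 (a.1 + b.1, a.2 + b.2) X := by
  funext ij
  simp [cshift2, sub_sub]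

lemma resPh_sub (s : ℕ) {H W : ℕ} (a b : ZMod (s * H) × ZMod (s * W)) :
    resPh s (a - b) = resPh s a - resPh s b := by
  simp [resPh, Prod.ext_iff, map_sub]

lemma polyNorm_cshift2 (s : ℕ) {H W C : ℕ} [NeZero (s * H)] [NeZero (s * W)]
    (X : ZMod (s * H) × ZMod (s * W) → EuclideanSpace ℝ (Fin C))
    (uv : ZMod (s * H) × ZMod (s * W)) (pq : ZMod s × ZMod s) :
    polyNorm s (cshift2 uv X) pq = polyNorm s X (pq - resPh s uv) := by
  unfold polyNorm
  refine Fintype.sum_equiv (Equiv.subRight uv) _ _ (fun kl => ?_)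
  have h : resPh s (kl - uv) = pq - resPh s uv ↔ resPh s kl = pq := by
    rw [resPh_sub, sub_left_inj]
  simp only [Equiv.subRight_apply, h, cshift2]
  rfl

/-- (Lemma 1) Polyphase anchoring is general shift-equivariant: if the polyphase norms
of `X` have a unique maximizer, then so do those of any circular shift of `X`, and
`P (shift_{(u,v)} X) = shift_{(u',v')} (P X)` for some shift `(u',v')`. -/
theorem polyAnchor_general_shift_equivariant
    (s H W C : ℕ) [NeZero s] [NeZero H] [NeZero W]
    (hs : 1 ≤ s) (hH : 1 ≤ H) (hW : 1 ≤ W) (hC : 1 ≤ C)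
    (X : ZMod (s * H) × ZMod (s * W) → EuclideanSpace ℝ (Fin C))
    (hX : HasUniqueMaxPhase s X)
    (uv : ZMod (s * H) × ZMod (s * W)) :
    HasUniqueMaxPhase s (cshift2 uv X) ∧
      ∃ u'v' : ZMod (s * H) × ZMod (s * W),
        polyAnchor s (cshift2 uv X) = cshift2 u'v' (polyAnchor s X) := by
  obtain ⟨pq0, hmax⟩ := hX
  have hUniq : HasUniqueMaxPhase s (cshift2 uv X) := by
    refine ⟨pq0 + resPh s uv, fun pq' hne => ?_⟩
    rw [polyNorm_cshift2, polyNorm_cshift2, add_sub_cancel_right]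
    refine hmax _ (fun h => hne ?_)
    rw [← h, sub_add_cancel]
  refine ⟨hUniq, ?_⟩
  refine ⟨(uv.1 - (anchorPhase s (cshift2 uv X)).1 + (anchorPhase s X).1,
    uv.2 - (anchorPhase s (cshift2 uv X)).2 + (anchorPhase s X).2), ?_⟩
  unfold polyAnchor
  rw [cshift2_cshift2, cshift2_cshift2]
  have h1 : -(anchorPhase s (cshift2 uv X)).1 + uv.1
      = uv.1 - (anchorPhase s (cshift2 uv X)).1 + (anchorPhase s X).1
        + -(anchorPhase s X).1 := by ring
  have h2 : -(anchorPhase s (cshift2 uv X)).2 + uv.2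
      = uv.2 - (anchorPhase s (cshift2 uv X)).2 + (anchorPhase s X).2
        + -(anchorPhase s X).2 := by ring
  rw [h1, h2]
end
end

section
/- (Corollary 1) In the general shift-equivariance of polyphase anchoring, the output shift is an integer multiple of the stride: fix s, H, W, C ≥ 1 and X : ZMod (s·H) × ZMod (s·W) → EuclideanSpace ℝ (Fin C) whose polyphase norms have a unique maximizer. Then for every (u,v) ∈ ZMod (s·H) × ZMod (s·W) there exist a ∈ ZMod H and b ∈ ZMod W such that P(shift_{(u,v)} X) = shift_{(ι_s a, ι_s b)} (P X), where ι_s a = s·a ∈ ZMod (s·H) and ι_s b = s·b ∈ ZMod (s·W). -/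
open Matrix
noncomputable section
/-- The group homomorphism `ι_s : ZMod H → ZMod (s·H)`, `k ↦ s·k`. -/
def iotaS (s : ℕ) {H : ℕ} (k : ZMod H) : ZMod (s * H) :=
  (s : ZMod (s * H)) * ((k.val : ℕ) : ZMod (s * H))
section Aux
variable {s H W C : ℕ} [NeZero (s * H)] [NeZero (s * W)]

lemma resPh_add (x y : ZMod (s * H) × ZMod (s * W)) :
    resPh s (x + y) = resPh s x + resPh s y := by
  simp only [resPh, Prod.fst_add, Prod.snd_add, map_add, Prod.mk_add_mk]

lemma polyNorm_cshift (X : ZMod (s * H) × ZMod (s * W) → EuclideanSpace ℝ (Fin C))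
    (uv : ZMod (s * H) × ZMod (s * W)) (pq : ZMod s × ZMod s) :
    polyNorm s (cshift2 uv X) pq = polyNorm s X (pq - resPh s uv) := by
  unfold polyNorm cshift2
  rw [← Equiv.sum_comp (Equiv.addRight uv)
    (fun ij : ZMod (s * H) × ZMod (s * W) =>
      if resPh s ij = pq then ‖X (ij.1 - uv.1, ij.2 - uv.2)‖ ^ 2 else 0)]
  apply Finset.sum_congr rfl
  intro k _
  have hk : ((Equiv.addRight uv) k : ZMod (s * H) × ZMod (s * W)) = k + uv := rfl
  rw [hk]
  have harg : ((k + uv).1 - uv.1, (k + uv).2 - uv.2) = k := by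
    cases k; cases uv; simp
  rw [harg]
  have hcond : (resPh s (k + uv) = pq) ↔ (resPh s k = pq - resPh s uv) := by
    rw [resPh_add, eq_sub_iff_add_eq]
  simp only [hcond]

lemma maxPhase_unique {X : ZMod (s * H) × ZMod (s * W) → EuclideanSpace ℝ (Fin C)}
    (hX : HasUniqueMaxPhase s X) {pq : ZMod s × ZMod s}
    (h : ∀ pq' : ZMod s × ZMod s, pq' ≠ pq → polyNorm s X pq' < polyNorm s X pq) :
    hX.choose = pq := by
  by_contra hne
  exact lt_asymm (hX.choose_spec pq (fun he => hne he.symm)) (h hX.choose hne)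

lemma exists_iota_of_res_zero (z : ZMod (s * H)) [NeZero s] [NeZero H]
    (hz : ZMod.castHom (dvd_mul_right s H) (ZMod s) z = 0) :
    ∃ a : ZMod H, iotaS s a = z := by
  have hsH : 0 < s * H := Nat.pos_of_ne_zero (NeZero.ne _)
  have hdvd : s ∣ z.val := by
    have h0 : ((z.val : ℕ) : ZMod s) = 0 := by
      rw [ZMod.natCast_val]
      rw [ZMod.castHom_apply] at hz
      exact hz
    exact (ZMod.natCast_eq_zero_iff _ _).mp h0
  obtain ⟨m, hm⟩ := hdvd
  have hs0 : 0 < s := Nat.pos_of_ne_zero (NeZero.ne _)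
  have hmH : m < H := by
    have hv : z.val < s * H := ZMod.val_lt z
    rw [hm] at hv
    exact lt_of_mul_lt_mul_left hv (Nat.zero_le s)
  refine ⟨(m : ZMod H), ?_⟩
  have hval : ((m : ZMod H)).val = m := by
    rw [ZMod.val_natCast, Nat.mod_eq_of_lt hmH]
  unfold iotaS
  rw [hval, ← Nat.cast_mul, ← hm, ZMod.natCast_val, ZMod.cast_id]

end Aux

/-- (Corollary 1) The output shift of polyphase anchoring is an integer multiple of the
stride: `P (shift_{(u,v)} X) = shift_{(ι_s a, ι_s b)} (P X)` for some `a : ZMod H`,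
`b : ZMod W`. -/
theorem polyAnchor_shift_is_stride_multiple
    (s H W C : ℕ) [NeZero s] [NeZero H] [NeZero W]
    (hs : 1 ≤ s) (hH : 1 ≤ H) (hW : 1 ≤ W) (hC : 1 ≤ C)
    (X : ZMod (s * H) × ZMod (s * W) → EuclideanSpace ℝ (Fin C))
    (hX : HasUniqueMaxPhase s X)
    (uv : ZMod (s * H) × ZMod (s * W)) :
    ∃ (a : ZMod H) (b : ZMod W),
      polyAnchor s (cshift2 uv X) = cshift2 (iotaS s a, iotaS s b) (polyAnchor s X) := by
  classical
  -- the shifted signal also has a unique max phase, at `hX.choose + resPh s uv`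
  have hX' : HasUniqueMaxPhase s (cshift2 uv X) := by
    refine ⟨hX.choose + resPh s uv, fun pq' hne => ?_⟩
    rw [polyNorm_cshift, polyNorm_cshift, add_sub_cancel_right]
    exact hX.choose_spec _ (fun he => hne (by rw [← he, sub_add_cancel]))
  have hch' : hX'.choose = hX.choose + resPh s uv := by
    apply maxPhase_unique hX'
    intro pq' hne
    rw [polyNorm_cshift, polyNorm_cshift, add_sub_cancel_right]
    exact hX.choose_spec _ (fun he => hne (by rw [← he, sub_add_cancel]))
  set A : ZMod (s * H) × ZMod (s * W) := anchorPhase s X with hA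
  set A' : ZMod (s * H) × ZMod (s * W) := anchorPhase s (cshift2 uv X) with hA'
  have hAdef : A = (((hX.choose.1.val : ℕ) : ZMod (s * H)), ((hX.choose.2.val : ℕ) : ZMod (s * W))) := by
    rw [hA, anchorPhase, dif_pos hX]
  have hA'def : A' = (((hX'.choose.1.val : ℕ) : ZMod (s * H)), ((hX'.choose.2.val : ℕ) : ZMod (s * W))) := by
    rw [hA', anchorPhase, dif_pos hX']
  have hresA : resPh s A = hX.choose := by
    rw [hAdef]
    unfold resPh
    simp [ZMod.natCast_val, ZMod.castHom_apply, ZMod.cast_natCast (dvd_mul_right s H),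
      ZMod.cast_natCast (dvd_mul_right s W)]
  have hresA' : resPh s A' = hX'.choose := by
    rw [hA'def]
    unfold resPh
    simp [ZMod.natCast_val, ZMod.castHom_apply, ZMod.cast_natCast (dvd_mul_right s H),
      ZMod.cast_natCast (dvd_mul_right s W)]
  -- the element whose image we need
  set z : ZMod (s * H) × ZMod (s * W) := uv - A' + A with hz
  have hresz : resPh s z = 0 := by
    have h1 : resPh s (uv - A') = resPh s uv - resPh s A' := by
      have := resPh_add (s := s) (H := H) (W := W) (uv - A') A'
      rw [sub_add_cancel] at this
      rw [this]; abel
    have := resPh_add (s := s) (H := H) (W := W) (uv - A') A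
    rw [hz, this, h1, hresA, hresA', hch']
    abel
  have hz1 : ZMod.castHom (dvd_mul_right s H) (ZMod s) z.1 = 0 := by
    have := congrArg Prod.fst hresz
    simpa [resPh] using this
  have hz2 : ZMod.castHom (dvd_mul_right s W) (ZMod s) z.2 = 0 := by
    have := congrArg Prod.snd hresz
    simpa [resPh] using this
  obtain ⟨a, ha⟩ := exists_iota_of_res_zero z.1 hz1
  obtain ⟨b, hb⟩ := exists_iota_of_res_zero z.2 hz2
  refine ⟨a, b, ?_⟩
  funext ij
  show (cshift2 uv X) (ij.1 - -A'.1, ij.2 - -A'.2) = (polyAnchor s X) (ij.1 - iotaS s a, ij.2 - iotaS s b)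
  rw [ha, hb]
  show X ((ij.1 - -A'.1) - uv.1, (ij.2 - -A'.2) - uv.2)
    = X ((ij.1 - z.1) - -A.1, (ij.2 - z.2) - -A.2)
  have e1 : (ij.1 - -A'.1) - uv.1 = (ij.1 - z.1) - -A.1 := by
    rw [hz]; simp [Prod.fst_sub, Prod.fst_add]; ring
  have e2 : (ij.2 - -A'.2) - uv.2 = (ij.2 - z.2) - -A.2 := by
    rw [hz]; simp [Prod.snd_sub, Prod.snd_add]; ring
  rw [e1, e2]
end
end

section
/- Stride-s circular convolution is equivariant to shifts by integer multiples of the stride: fix s, H, W, C ≥ 1, a kernel h : Fin C × (ZMod (s·H) × ZMod (s·W)) → ℝ, and X : ZMod (s·H) × ZMod (s·W) → EuclideanSpace ℝ (Fin C). Then for all a ∈ ZMod H and b ∈ ZMod W, (shift_{(ι_s a, ι_s b)} X) ⋆_s h = shift_{(a,b)} (X ⋆_s h). -/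
open Matrix
noncomputable section
/-- Stride-`s` circular convolution (patch embedding):
`(X ⋆_s h)(k,l) = ∑_{c} ∑_{(a,b)} h(c,a,b) · X(ι_s k + a, ι_s l + b) c`. -/
def sconv (s : ℕ) {H W C : ℕ} [NeZero (s * H)] [NeZero (s * W)]
    (X : ZMod (s * H) × ZMod (s * W) → EuclideanSpace ℝ (Fin C))
    (h : Fin C × (ZMod (s * H) × ZMod (s * W)) → ℝ) : ZMod H × ZMod W → ℝ :=
  fun kl => ∑ c : Fin C, ∑ ab : ZMod (s * H) × ZMod (s * W),
    h (c, ab) * X (iotaS s kl.1 + ab.1, iotaS s kl.2 + ab.2) c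


lemma iotaS_add (s : ℕ) {H : ℕ} [NeZero H] (x y : ZMod H) :
    iotaS s (x + y) = iotaS s x + iotaS s y := by
  unfold iotaS
  rw [← mul_add, ← Nat.cast_add]
  have h1 : (x + y).val ≡ x.val + y.val [MOD H] := by
    rw [ZMod.val_add]; exact (Nat.mod_modEq _ _)
  have h2 := (ZMod.natCast_eq_natCast_iff (s * (x + y).val) (s * (x.val + y.val))
    (s * H)).mpr (Nat.ModEq.mul_left' h1 (c := s))
  push_cast at h2
  push_cast
  exact h2

lemma iotaS_sub (s : ℕ) {H : ℕ} [NeZero H] (x y : ZMod H) :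
    iotaS s (x - y) = iotaS s x - iotaS s y :=
  (AddMonoidHom.mk' (iotaS s) (iotaS_add s)).map_sub x y

/-- Stride-`s` circular convolution is equivariant to shifts by integer multiples of the
stride: `(shift_{(ι_s a, ι_s b)} X) ⋆_s h = shift_{(a,b)} (X ⋆_s h)`. -/
theorem sconv_stride_shift_equivariant
    (s H W C : ℕ) [NeZero s] [NeZero H] [NeZero W]
    (hs : 1 ≤ s) (hH : 1 ≤ H) (hW : 1 ≤ W) (hC : 1 ≤ C)
    (h : Fin C × (ZMod (s * H) × ZMod (s * W)) → ℝ)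
    (X : ZMod (s * H) × ZMod (s * W) → EuclideanSpace ℝ (Fin C))
    (a : ZMod H) (b : ZMod W) :
    sconv s (cshift2 (iotaS s a, iotaS s b) X) h = cshift2 (a, b) (sconv s X h) := by
  funext kl
  simp only [sconv, cshift2]
  refine Finset.sum_congr rfl fun c _ => Finset.sum_congr rfl fun ab _ => ?_
  rw [iotaS_sub, iotaS_sub, sub_add_eq_add_sub, sub_add_eq_add_sub]
end
end

section
/- Window attention is equivariant to shifts by integer multiples of the window size: fix s, H, W, d, d_k, d_v ≥ 1, weight matrices W_q, W_k : Matrix (Fin d) (Fin d_k) ℝ and W_v : Matrix (Fin d) (Fin d_v) ℝ, and X : ZMod (s·H) × ZMod (s·W) → (Fin d → ℝ). Then for all a ∈ ZMod H and b ∈ ZMod W, A_w(shift_{(ι_s a, ι_s b)} X) = shift_{(ι_s a, ι_s b)} (A_w X). -/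
open Matrix
noncomputable section
/-- Two grid points lie in the same `s×s` window iff the floors of their coordinates
divided by `s` agree: `⌊i.val/s⌋ = ⌊i'.val/s⌋` and `⌊j.val/s⌋ = ⌊j'.val/s⌋`. -/
def sameWindow (s : ℕ) {H W : ℕ} (ij ij' : ZMod (s * H) × ZMod (s * W)) : Prop :=
  ij.1.val / s = ij'.1.val / s ∧ ij.2.val / s = ij'.2.val / s

instance (s : ℕ) {H W : ℕ} (ij ij' : ZMod (s * H) × ZMod (s * W)) :
    Decidable (sameWindow s ij ij') :=
  inferInstanceAs (Decidable (_ ∧ _))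

/-- Window attention with `s×s` windows: self-attention restricted to the window
containing each query token, with softmax taken over that window. -/
def windowAttn (s : ℕ) {H W d dk dv : ℕ} [NeZero (s * H)] [NeZero (s * W)]
    (Wq Wk : Matrix (Fin d) (Fin dk) ℝ) (Wv : Matrix (Fin d) (Fin dv) ℝ)
    (X : ZMod (s * H) × ZMod (s * W) → (Fin d → ℝ)) :
    ZMod (s * H) × ZMod (s * W) → (Fin dv → ℝ) :=
  fun ij => ∑ ij' : ZMod (s * H) × ZMod (s * W),
    if sameWindow s ij ij' then
      (Real.exp (Wq.transpose.mulVec (X ij) ⬝ᵥ Wk.transpose.mulVec (X ij')) /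
        ∑ ij'' : ZMod (s * H) × ZMod (s * W),
          if sameWindow s ij ij'' then
            Real.exp (Wq.transpose.mulVec (X ij) ⬝ᵥ Wk.transpose.mulVec (X ij''))
          else 0)
        • Wv.transpose.mulVec (X ij')
    else 0

lemma nat_key_shift (s H x c : ℕ) (hs : 0 < s) :
    ((x + s * c) % (s * H)) / s = (x / s + c) % H := by
  rw [Nat.mod_mul_right_div_self, Nat.add_mul_div_left _ _ hs]

lemma dvd_val_iota (s : ℕ) {H : ℕ} [NeZero (s * H)] (a : ZMod H) :
    s ∣ (iotaS s a).val := by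
  unfold iotaS
  rw [ZMod.val_mul]
  refine (Nat.dvd_mod_iff (dvd_mul_right s H)).mpr (Dvd.dvd.mul_right ?_ _)
  rw [ZMod.val_natCast]
  exact (Nat.dvd_mod_iff (dvd_mul_right s H)).mpr dvd_rfl

lemma key1 (s H : ℕ) [NeZero s] [NeZero H] (a : ZMod H) (i i' : ZMod (s * H)) :
    (i - iotaS s a).val / s = (i' - iotaS s a).val / s ↔ i.val / s = i'.val / s := by
  have hspos : 0 < s := Nat.pos_of_ne_zero (NeZero.ne s)
  set u := iotaS s a with hu
  have hdvd : s ∣ (-u).val := by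
    rw [ZMod.neg_val]
    split
    · exact dvd_zero s
    · exact Nat.dvd_sub (dvd_mul_right s H) (dvd_val_iota s a)
  obtain ⟨c, hc⟩ := hdvd
  have key : ∀ j : ZMod (s * H), (j - u).val / s = (j.val / s + c) % H := by
    intro j
    rw [sub_eq_add_neg, ZMod.val_add, hc, nat_key_shift s H _ c hspos]
  rw [key i, key i']
  have hq : i.val / s < H := (Nat.div_lt_iff_lt_mul hspos).mpr
    (by simpa [mul_comm] using ZMod.val_lt i)
  have hq' : i'.val / s < H := (Nat.div_lt_iff_lt_mul hspos).mpr
    (by simpa [mul_comm] using ZMod.val_lt i')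
  constructor
  · intro h
    have h2 : i.val / s ≡ i'.val / s [MOD H] := Nat.ModEq.add_right_cancel' c h
    rw [Nat.ModEq, Nat.mod_eq_of_lt hq, Nat.mod_eq_of_lt hq'] at h2
    exact h2
  · intro h
    rw [h]

lemma shift_sum_zmod {M N : ℕ} [NeZero M] [NeZero N] {β : Type*} [AddCommMonoid β]
    (w : ZMod M × ZMod N) (f : ZMod M × ZMod N → β) :
    ∑ p, f (p - w) = ∑ p, f p :=
  Fintype.sum_equiv (Equiv.subRight w) _ _ (fun _ => rfl)

/-- Window attention is equivariant to shifts by integer multiples of the window size: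
`A_w (shift_{(ι_s a, ι_s b)} X) = shift_{(ι_s a, ι_s b)} (A_w X)`. -/
theorem windowAttn_stride_shift_equivariant
    (s H W d dk dv : ℕ) [NeZero s] [NeZero H] [NeZero W]
    (hs : 1 ≤ s) (hH : 1 ≤ H) (hW : 1 ≤ W) (hd : 1 ≤ d) (hdk : 1 ≤ dk) (hdv : 1 ≤ dv)
    (Wq Wk : Matrix (Fin d) (Fin dk) ℝ) (Wv : Matrix (Fin d) (Fin dv) ℝ)
    (X : ZMod (s * H) × ZMod (s * W) → (Fin d → ℝ))
    (a : ZMod H) (b : ZMod W) :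
    windowAttn s Wq Wk Wv (cshift2 (iotaS s a, iotaS s b) X) =
      cshift2 (iotaS s a, iotaS s b) (windowAttn s Wq Wk Wv X) := by
  have hwin : ∀ (x y : ZMod (s * H) × ZMod (s * W)),
      sameWindow s (x.1 - iotaS s a, x.2 - iotaS s b) (y.1 - iotaS s a, y.2 - iotaS s b) ↔
        sameWindow s x y := by
    intro x y
    exact and_congr (key1 s H a x.1 y.1) (key1 s W b x.2 y.2)
  funext ij
  simp only [cshift2, windowAttn]
  refine Fintype.sum_equiv (Equiv.subRight (iotaS s a, iotaS s b)) _ _ (fun p => ?_)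
  refine if_congr ((hwin ij p).symm) ?_ rfl
  congr 2
  exact Fintype.sum_equiv (Equiv.subRight (iotaS s a, iotaS s b)) _ _
    (fun q => if_congr ((hwin ij q).symm) rfl rfl)
end
end

section
/- Stride-s circular convolution (patch embedding) is not shift-equivariant, even in the general sense: for all s ≥ 2 and H, W, C ≥ 1 there exist a kernel h : Fin C × (ZMod (s·H) × ZMod (s·W)) → ℝ, an input X : ZMod (s·H) × ZMod (s·W) → EuclideanSpace ℝ (Fin C), and a shift (u,v) ∈ ZMod (s·H) × ZMod (s·W) such that for every (a,b) ∈ ZMod H × ZMod W, (shift_{(u,v)} X) ⋆_s h ≠ shift_{(a,b)} (X ⋆_s h). -/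
/-! With a kernel that is an impulse at `(c₀, (0,0))`, `X ⋆_s h` samples channel `c₀` of `X`
on the subgrid `s ℤ × s ℤ`, and `s · k ≠ 1` in `ZMod (s·H)` for `s ≥ 2`. So an input impulse at
`(1,0)` is invisible, `X ⋆_s h = 0`, whereas its shift by `(-1,0)` lies on the subgrid and
produces a nonzero output, which no shift of `0` can match. -/

open Matrix
noncomputable section
lemma castHom_iotaS (s : ℕ) {H : ℕ} (k : ZMod H) :
    ZMod.castHom (dvd_mul_right s H) (ZMod s) (iotaS s k) = 0 := by
  simp [iotaS]

lemma iotaS_ne_one {s : ℕ} (hs : 2 ≤ s) {H : ℕ} (k : ZMod H) : iotaS s k ≠ 1 := by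
  have : Fact (1 < s) := ⟨hs⟩
  intro hk
  simpa [hk] using castHom_iotaS s k

@[simp]
lemma iotaS_zero (s : ℕ) {H : ℕ} : iotaS s (0 : ZMod H) = 0 := by
  simp [iotaS]

lemma sconv_single_kernel (s : ℕ) {H W C : ℕ} [NeZero (s * H)] [NeZero (s * W)]
    (X : ZMod (s * H) × ZMod (s * W) → EuclideanSpace ℝ (Fin C)) (c : Fin C)
    (p : ZMod (s * H) × ZMod (s * W)) (kl : ZMod H × ZMod W) :
    sconv s X (Pi.single (c, p) 1) kl = X (iotaS s kl.1 + p.1, iotaS s kl.2 + p.2) c := by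
  rw [sconv, ← Fintype.sum_prod_type', Fintype.sum_eq_single (c, p)]
  · simp
  · intro q hq
    simp [hq]

theorem sconv_not_shift_equivariant_general
    (s H W C : ℕ) [NeZero s] [NeZero H] [NeZero W]
    (hs : 2 ≤ s) (hC : 1 ≤ C) :
    ∃ (h : Fin C × (ZMod (s * H) × ZMod (s * W)) → ℝ)
      (X : ZMod (s * H) × ZMod (s * W) → EuclideanSpace ℝ (Fin C))
      (uv : ZMod (s * H) × ZMod (s * W)),
      ∀ ab : ZMod H × ZMod W,
        sconv s (cshift2 uv X) h ≠ cshift2 ab (sconv s X h) := by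
  let c₀ : Fin C := ⟨0, hC⟩
  let X : ZMod (s * H) × ZMod (s * W) → EuclideanSpace ℝ (Fin C) :=
    Pi.single (1, 0) (EuclideanSpace.single c₀ 1)
  refine ⟨Pi.single (c₀, 0) 1, X, (-1, 0), fun ab hEq => ?_⟩
  have hX : sconv s X (Pi.single (c₀, 0) 1) = 0 := by
    ext kl
    simp [sconv_single_kernel, X, iotaS_ne_one hs]
  have hshift : sconv s (cshift2 (-1, 0) X) (Pi.single (c₀, 0) 1) (0, 0) = 1 := by
    simp [sconv_single_kernel, cshift2, X]
  simpa [hX, hshift, cshift2] using congrFun hEq (0, 0)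

/-- Stride-`s` circular convolution (patch embedding) is not shift-equivariant, even in
the general sense: for `s ≥ 2` there are a kernel, an input, and a shift `(u,v)` such
that no output shift `(a,b)` satisfies
`(shift_{(u,v)} X) ⋆_s h = shift_{(a,b)} (X ⋆_s h)`. -/
theorem sconv_not_shift_equivariant
    (s H W C : ℕ) [NeZero s] [NeZero H] [NeZero W]
    (hs : 2 ≤ s) (hH : 1 ≤ H) (hW : 1 ≤ W) (hC : 1 ≤ C) :
    ∃ (h : Fin C × (ZMod (s * H) × ZMod (s * W)) → ℝ)
      (X : ZMod (s * H) × ZMod (s * W) → EuclideanSpace ℝ (Fin C))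
      (uv : ZMod (s * H) × ZMod (s * W)),
      ∀ ab : ZMod H × ZMod W,
        sconv s (cshift2 uv X) h ≠ cshift2 ab (sconv s X h) :=
  sconv_not_shift_equivariant_general s H W C hs hC
end
end

section
/- Absolute positional embedding is not shift-equivariant, even in the general sense: for all n ≥ 2, d ≥ 1, and every positional embedding E : ZMod n → (Fin d → ℝ) that is not constant, there exists a shift u ∈ ZMod n such that for every v ∈ ZMod n there exists a token map X : ZMod n → (Fin d → ℝ) with (shift_u X) + E ≠ shift_v (X + E), where + denotes pointwise addition and (shift_u X) t = X (t - u). -/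
open Matrix
noncomputable section
/-- Circular shift of a 1D signal `X : ZMod n → α` by `u`: `(shift_u X) t = X (t-u)`. -/
def cshift1 {n : ℕ} {α : Type*} (u : ZMod n) (X : ZMod n → α) : ZMod n → α :=
  fun t => X (t - u)

lemma shift_one_const {n : ℕ} [NeZero n] {α : Type*} (E : ZMod n → α)
    (h : ∀ t : ZMod n, E t = E (t - 1)) : ∀ t : ZMod n, E t = E 0 := by
  have key : ∀ k : ℕ, E (k : ZMod n) = E 0 := by
    intro k
    induction k with
    | zero => simp
    | succ m ih =>
      have := h ((m + 1 : ℕ) : ZMod n)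
      push_cast at this
      simpa [this] using ih
  intro t
  have : ((t.val : ℕ) : ZMod n) = t := by simp [ZMod.natCast_val, ZMod.cast_id]
  rw [← this]; exact key t.val

/-- Absolute positional embedding is not shift-equivariant, even in the general sense:
for every non-constant embedding `E` there is a shift `u` such that for every candidate
output shift `v` some token map `X` witnesses `(shift_u X) + E ≠ shift_v (X + E)`. -/
theorem absolutePositionalEmbedding_not_shift_equivariant
    (n d : ℕ) (hn : 2 ≤ n) (hd : 1 ≤ d)
    (E : ZMod n → (Fin d → ℝ)) (hE : ∃ t t' : ZMod n, E t ≠ E t') :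
    ∃ u : ZMod n, ∀ v : ZMod n, ∃ X : ZMod n → (Fin d → ℝ),
      (cshift1 u X) + E ≠ cshift1 v (X + E) := by
  refine ⟨1, fun v => ?_⟩
  by_cases hv : v = 1
  · subst hv
    refine ⟨0, fun hcon => ?_⟩
    have hper : ∀ t : ZMod n, E t = E (t - 1) := by
      intro t
      have := congrFun hcon t
      simpa [cshift1] using this
    have : NeZero n := ⟨by omega⟩
    have hconst := shift_one_const E hper
    obtain ⟨t, t', ht⟩ := hE
    exact ht ((hconst t).trans (hconst t').symm)
  · set i : Fin d := ⟨0, hd⟩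
    set M : ℝ := E (1 - v) i - E 1 i + 1 with hM
    refine ⟨fun s _ => if s = 0 then M else 0, fun hcon => ?_⟩
    have h1 := congrFun (congrFun hcon 1) i
    have h1v : (1 : ZMod n) - v ≠ 0 := sub_ne_zero.mpr (fun h => hv h.symm)
    simp [cshift1, Pi.add_apply, h1v] at h1
    rw [hM] at h1
    linarith
end
end

section
/- Stride-s circular downsampling is not shift-equivariant, even in the general sense: for all s ≥ 2 and H ≥ 1 there exist X : ZMod (s·H) → ℝ and u ∈ ZMod (s·H) such that for every w ∈ ZMod H, D_s(shift_u X) ≠ shift_w (D_s X), where D_s X : ZMod H → ℝ is defined by (D_s X) k = X (ι_s k). -/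
open Matrix
noncomputable section
/-- Stride-`s` circular downsampling: `(D_s X) k = X (ι_s k)`. -/
def downsample (s : ℕ) {H : ℕ} (X : ZMod (s * H) → ℝ) : ZMod H → ℝ :=
  fun k => X (iotaS s k)

/-- Stride-`s` circular downsampling is not shift-equivariant, even in the general
sense: for `s ≥ 2` there are an input `X` and a shift `u` such that no output shift `w`
satisfies `D_s (shift_u X) = shift_w (D_s X)`. -/
theorem downsample_not_shift_equivariant
    (s H : ℕ) (hs : 2 ≤ s) (hH : 1 ≤ H) :
    ∃ (X : ZMod (s * H) → ℝ) (u : ZMod (s * H)),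
      ∀ w : ZMod H, downsample s (cshift1 u X) ≠ cshift1 w (downsample s X) := by
  have hsH : 0 < s * H := Nat.mul_pos (by omega) (by omega)
  haveI : NeZero (s * H) := ⟨by omega⟩
  haveI : NeZero H := ⟨by omega⟩
  refine ⟨fun t => if s ∣ t.val then 1 else 0, 1, ?_⟩
  intro w h
  have hdiv : ∀ k : ZMod H, s ∣ (iotaS s k).val := by
    intro k
    have : iotaS s k = ((s * k.val : ℕ) : ZMod (s * H)) := by
      unfold iotaS; push_cast; ring
    rw [this, ZMod.val_natCast]
    exact (Nat.dvd_mod_iff ⟨H, rfl⟩).mpr ⟨k.val, rfl⟩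
  have hnot : ¬ s ∣ (iotaS s (0 : ZMod H) - 1).val := by
    have h0 : iotaS s (0 : ZMod H) = 0 := by
      unfold iotaS; simp
    rw [h0]
    have : ((0 : ZMod (s * H)) - 1) = ((s * H - 1 : ℕ) : ZMod (s * H)) := by
      rw [Nat.cast_sub (by omega : 1 ≤ s * H), ZMod.natCast_self]
      simp
    rw [this, ZMod.val_natCast, Nat.mod_eq_of_lt (by omega)]
    intro hd
    have h1 : s ∣ s * H - (s * H - 1) := Nat.dvd_sub ⟨H, rfl⟩ hd
    rw [Nat.sub_sub_self (by omega)] at h1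
    exact absurd (Nat.le_of_dvd one_pos h1) (by omega)
  have h0 := congrFun h 0
  simp only [downsample, cshift1] at h0
  rw [if_neg hnot, if_pos (hdiv _)] at h0
  exact zero_ne_one h0
end
end
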